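/- Let T = A ∪ B and X = (X(t) : t ∈ T) a stochastic process. Suppose (1) there exist A₁, A₂ ⊆ A such that X_{A₁} is independent of X_{A∖A₁} given X_{A₂}, and (2) there exists A_b ⊆ A∖A₁ such that X_A is independent of X_B given X_{A_b}. Then X_{B ∪ (A∖A₁)} is independent of X_{A₁} given X_{A₂}. -/

import Mathlib

open MeasureTheory ProbabilityTheory

/-- The σ-algebra generated by the random variables `(X t : t ∈ S)`. -/
def procSigma {T Ω : Type*} [MeasurableSpace Ω] (X : T → Ω → ℝ) (S : Set T) :
    MeasurableSpace Ω :=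
  ⨆ t ∈ S, MeasurableSpace.comap (X t) inferInstance

theorem procSigma_le {T Ω : Type*} [m : MeasurableSpace Ω] {X : T → Ω → ℝ}
    (hX : ∀ t, Measurable (X t)) (S : Set T) : procSigma X S ≤ m :=
  iSup₂_le fun t _ => (hX t).comap_le

/-!
Conditional independence of `m₁` and `m₂` given `m'` is equivalent to
`P(s | m₁ ⊔ m') = P(s | m')` a.e. for every `s ∈ m₂`. In this form the semi-graphoid rules
(weak union and contraction) reduce to the tower property. The σ-algebra
`n = σ(X_{A∖A₁}, X_{A₂})` lies between `σ(X_{A_b})` and `σ(X_A)`, so weak union turns (2)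
into `X_B ⊥ X_{A₁} | n`; contraction with (1) then gives `(X_B, X_{A∖A₁}) ⊥ X_{A₁} | X_{A₂}`.
-/

theorem IsPiSystem.image2_inter {α : Type*} {S T : Set (Set α)} (hS : IsPiSystem S)
    (hT : IsPiSystem T) : IsPiSystem (Set.image2 (· ∩ ·) S T) := by
  rintro _ ⟨s₁, hs₁, t₁, ht₁, rfl⟩ _ ⟨s₂, hs₂, t₂, ht₂, rfl⟩ hne
  rw [Set.inter_inter_inter_comm] at hne ⊢
  exact ⟨_, hS _ hs₁ _ hs₂ (Set.Nonempty.left hne), _, hT _ ht₁ _ ht₂ (Set.Nonempty.right hne),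
    rfl⟩

theorem MeasurableSpace.sup_eq_generateFrom_image2_inter {α : Type*}
    (m₁ m₂ : MeasurableSpace α) :
    m₁ ⊔ m₂ = generateFrom
      (Set.image2 (· ∩ ·) {s | MeasurableSet[m₁] s} {s | MeasurableSet[m₂] s}) := by
  refine le_antisymm (sup_le ?_ ?_) (generateFrom_le ?_)
  · exact fun s hs => measurableSet_generateFrom ⟨s, hs, Set.univ, .univ, Set.inter_univ s⟩
  · exact fun s hs => measurableSet_generateFrom ⟨Set.univ, .univ, s, hs, Set.univ_inter s⟩
  · rintro _ ⟨s, hs, t, ht, rfl⟩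
    exact (le_sup_left (b := m₂) s hs).inter (le_sup_right (a := m₁) t ht)

namespace MeasureTheory

variable {Ω : Type*} {mΩ : MeasurableSpace Ω} {μ : Measure Ω}

theorem integral_mul_condExp_of_bound {m : MeasurableSpace Ω} (hm : m ≤ mΩ)
    [IsFiniteMeasure μ] {f g : Ω → ℝ} (hf : StronglyMeasurable[m] f) {c : ℝ}
    (hfc : ∀ᵐ x ∂μ, ‖f x‖ ≤ c) (hg : Integrable g μ) :
    ∫ x, f x * (μ[g|m]) x ∂μ = ∫ x, f x * g x ∂μ :=
  calc ∫ x, (f * μ[g|m]) x ∂μ = ∫ x, (μ[f * g|m]) x ∂μ :=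
        integral_congr_ae (condExp_stronglyMeasurable_mul_of_bound hm hf hg c hfc).symm
    _ = ∫ x, (f * g) x ∂μ := integral_condExp hm

theorem setIntegral_eq_of_isPiSystem {m : MeasurableSpace Ω} (hm : m ≤ mΩ) {C : Set (Set Ω)}
    (hmC : m = MeasurableSpace.generateFrom C) (hC : IsPiSystem C) {f g : Ω → ℝ}
    (hf : Integrable f μ) (hg : Integrable g μ) (huniv : ∫ x, f x ∂μ = ∫ x, g x ∂μ)
    (hbasic : ∀ u ∈ C, ∫ x in u, f x ∂μ = ∫ x in u, g x ∂μ) {u : Set Ω}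
    (hu : MeasurableSet[m] u) : ∫ x in u, f x ∂μ = ∫ x in u, g x ∂μ := by
  induction u, hu using MeasurableSpace.induction_on_inter hmC hC with
  | empty => simp
  | basic u hu => exact hbasic u hu
  | compl u hu ih =>
    have hf' := integral_add_compl (hm u hu) hf
    have hg' := integral_add_compl (hm u hu) hg
    linarith
  | iUnion u hdisj hu ih =>
    rw [integral_iUnion (fun i => hm _ (hu i)) hdisj hf.integrableOn,
      integral_iUnion (fun i => hm _ (hu i)) hdisj hg.integrableOn]
    exact tsum_congr ih

end MeasureTheory

namespace ProbabilityTheory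

variable {Ω : Type*} {mΩ : MeasurableSpace Ω} {μ : Measure Ω}

theorem ae_norm_condExp_indicator_le_one (m : MeasurableSpace Ω) (s : Set Ω) :
    ∀ᵐ x ∂μ, ‖(μ⟦s | m⟧) x‖ ≤ 1 := by
  have hs : ∀ᵐ x ∂μ, |s.indicator (fun _ => (1 : ℝ)) x| ≤ 1 :=
    .of_forall fun x => by by_cases hx : x ∈ s <;> simp [hx]
  simpa using ae_bdd_abs_condExp_of_ae_bdd_abs (m := m) hs

section CondIndep

variable [StandardBorelSpace Ω] [IsFiniteMeasure μ] {m' m₁ m₂ : MeasurableSpace Ω}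

local notation "𝟙" s => Set.indicator s (fun _ => (1 : ℝ))

-- Both sides equal `∫ 𝟙 v * P(t | m') * P(s | m')`: the left one after pulling out the
-- `m'`-measurable factor `𝟙 v * P(s | m')`, the right one by conditional independence.
theorem CondIndep.setIntegral_inter_condExp_indicator {hm' : m' ≤ mΩ} (hm₁ : m₁ ≤ mΩ)
    (hm₂ : m₂ ≤ mΩ) (h : CondIndep m' m₁ m₂ hm' μ) {s t v : Set Ω} (hs : MeasurableSet[m₂] s)
    (ht : MeasurableSet[m₁] t) (hv : MeasurableSet[m'] v) :
    ∫ x in t ∩ v, (μ⟦s | m'⟧) x ∂μ = ∫ x in t ∩ v, (𝟙 s) x ∂μ := by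
  have ht_int : Integrable (𝟙 t) μ := (integrable_const 1).indicator (hm₁ t ht)
  have hts_int : Integrable (𝟙 (t ∩ s)) μ :=
    (integrable_const 1).indicator ((hm₁ t ht).inter (hm₂ s hs))
  set g := μ⟦s | m'⟧
  have hg_le : ∀ᵐ x ∂μ, ‖g x‖ ≤ 1 := ae_norm_condExp_indicator_le_one m' s
  calc ∫ x in t ∩ v, g x ∂μ = ∫ x, v.indicator g x * (𝟙 t) x ∂μ := by
        rw [← integral_indicator ((hm₁ t ht).inter (hm' v hv))]
        congr with x
        by_cases hxt : x ∈ t <;> by_cases hxv : x ∈ v <;> simp [hxt, hxv]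
    _ = ∫ x, v.indicator g x * (μ⟦t | m'⟧) x ∂μ :=
        (integral_mul_condExp_of_bound hm' (stronglyMeasurable_condExp.indicator hv)
          (hg_le.mono fun x hx => (norm_indicator_le_norm_self _ _).trans hx) ht_int).symm
    _ = ∫ x, (𝟙 v) x * ((μ⟦t | m'⟧) x * g x) ∂μ := by
        congr with x
        by_cases hxv : x ∈ v <;> simp [hxv, mul_comm]
    _ = ∫ x, (𝟙 v) x * (μ⟦t ∩ s | m'⟧) x ∂μ := by
        refine integral_congr_ae
          (((condIndep_iff m' m₁ m₂ hm' hm₁ hm₂ μ).1 h t s ht hs).mono fun x hx => ?_)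
        simp only [hx, Pi.mul_apply, g]
    _ = ∫ x, (𝟙 v) x * (𝟙 (t ∩ s)) x ∂μ :=
        integral_mul_condExp_of_bound hm' (stronglyMeasurable_const.indicator hv) (c := 1)
          (.of_forall fun x => (norm_indicator_le_norm_self _ _).trans (by simp)) hts_int
    _ = ∫ x in t ∩ v, (𝟙 s) x ∂μ := by
        rw [← integral_indicator ((hm₁ t ht).inter (hm' v hv))]
        congr with x
        by_cases hxt : x ∈ t <;> by_cases hxv : x ∈ v <;> by_cases hxs : x ∈ s <;>
          simp [hxt, hxv, hxs]

theorem CondIndep.condExp_indicator_sup_ae_eq {hm' : m' ≤ mΩ} (hm₁ : m₁ ≤ mΩ)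
    (hm₂ : m₂ ≤ mΩ) (h : CondIndep m' m₁ m₂ hm' μ) {s : Set Ω} (hs : MeasurableSet[m₂] s) :
    μ⟦s | m₁ ⊔ m'⟧ =ᵐ[μ] μ⟦s | m'⟧ := by
  have hsup : m₁ ⊔ m' ≤ mΩ := sup_le hm₁ hm'
  have hs_int : Integrable (𝟙 s) μ := (integrable_const 1).indicator (hm₂ s hs)
  refine (ae_eq_condExp_of_forall_setIntegral_eq hsup hs_int
    (fun _ _ _ => integrable_condExp.integrableOn) (fun u hu _ => ?_)
    (stronglyMeasurable_condExp.mono (le_sup_right : m' ≤ m₁ ⊔ m')).aestronglyMeasurable).symm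
  refine setIntegral_eq_of_isPiSystem hsup (MeasurableSpace.sup_eq_generateFrom_image2_inter _ _)
    ((@MeasurableSpace.isPiSystem_measurableSet _ m₁).image2_inter
      (@MeasurableSpace.isPiSystem_measurableSet _ m'))
    integrable_condExp hs_int (integral_condExp hm') ?_ hu
  rintro _ ⟨t, ht, v, hv, rfl⟩
  exact h.setIntegral_inter_condExp_indicator hm₁ hm₂ hs ht hv

theorem condIndep_of_condExp_indicator_sup_ae_eq (hm' : m' ≤ mΩ) (hm₁ : m₁ ≤ mΩ)
    (hm₂ : m₂ ≤ mΩ) (h : ∀ s, MeasurableSet[m₂] s → μ⟦s | m₁ ⊔ m'⟧ =ᵐ[μ] μ⟦s | m'⟧) :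
    CondIndep m' m₁ m₂ hm' μ := by
  refine (condIndep_iff m' m₁ m₂ hm' hm₁ hm₂ μ).2 fun t s ht hs => ?_
  have hsup : m₁ ⊔ m' ≤ mΩ := sup_le hm₁ hm'
  have ht_int : Integrable (𝟙 t) μ := (integrable_const 1).indicator (hm₁ t ht)
  have hs_int : Integrable (𝟙 s) μ := (integrable_const 1).indicator (hm₂ s hs)
  have ht_le : ∀ᵐ x ∂μ, ‖(𝟙 t) x‖ ≤ 1 :=
    .of_forall fun x => (norm_indicator_le_norm_self _ _).trans (by simp)
  have hts : (𝟙 (t ∩ s)) = (𝟙 t) * 𝟙 s := Set.inter_indicator_one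
  calc μ⟦t ∩ s | m'⟧ = μ[(𝟙 t) * 𝟙 s | m'] := by rw [hts]
    _ =ᵐ[μ] μ[μ[(𝟙 t) * 𝟙 s | m₁ ⊔ m'] | m'] := (condExp_condExp_of_le le_sup_right hsup).symm
    _ =ᵐ[μ] μ[(𝟙 t) * μ⟦s | m₁ ⊔ m'⟧ | m'] := condExp_congr_ae
        (condExp_stronglyMeasurable_mul_of_bound hsup
          ((stronglyMeasurable_const.indicator ht).mono le_sup_left) hs_int 1 ht_le)
    _ =ᵐ[μ] μ[μ⟦s | m'⟧ * 𝟙 t | m'] := by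
        rw [mul_comm _ (𝟙 t)]
        exact condExp_congr_ae (Filter.EventuallyEq.rfl.mul (h s hs))
    _ =ᵐ[μ] μ⟦s | m'⟧ * μ⟦t | m'⟧ := condExp_stronglyMeasurable_mul_of_bound hm'
        stronglyMeasurable_condExp ht_int 1 (ae_norm_condExp_indicator_le_one m' s)
    _ = μ⟦t | m'⟧ * μ⟦s | m'⟧ := mul_comm _ _

theorem CondIndep.weak_union {n : MeasurableSpace Ω} {hm' : m' ≤ mΩ} (hm₁ : m₁ ≤ mΩ)
    (hm₂ : m₂ ≤ mΩ) (hn : n ≤ mΩ) (h : CondIndep m' m₁ m₂ hm' μ) (hm'n : m' ≤ n)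
    (hnm₁ : n ≤ m₁ ⊔ m') : CondIndep n m₁ m₂ hn μ := by
  refine condIndep_of_condExp_indicator_sup_ae_eq hn hm₁ hm₂ fun s hs => ?_
  have hsup : m₁ ⊔ n = m₁ ⊔ m' := le_antisymm (sup_le le_sup_left hnm₁) (sup_le_sup_left hm'n _)
  have hs' := h.condExp_indicator_sup_ae_eq hm₁ hm₂ hs
  calc μ⟦s | m₁ ⊔ n⟧ = μ⟦s | m₁ ⊔ m'⟧ := by rw [hsup]
    _ =ᵐ[μ] μ⟦s | m'⟧ := hs'
    _ = μ[μ⟦s | m'⟧ | n] :=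
        (condExp_of_stronglyMeasurable hn (stronglyMeasurable_condExp.mono hm'n)
          integrable_condExp).symm
    _ =ᵐ[μ] μ[μ⟦s | m₁ ⊔ m'⟧ | n] := condExp_congr_ae hs'.symm
    _ =ᵐ[μ] μ⟦s | n⟧ := condExp_condExp_of_le hnm₁ (sup_le hm₁ hm')

theorem CondIndep.contraction {m₃ : MeasurableSpace Ω} {hm' : m' ≤ mΩ} (hm₁ : m₁ ≤ mΩ)
    (hm₂ : m₂ ≤ mΩ) (hm₃ : m₃ ≤ mΩ) (h : CondIndep m' m₁ m₂ hm' μ)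
    (h' : CondIndep (m₁ ⊔ m') m₃ m₂ (sup_le hm₁ hm') μ) : CondIndep m' (m₃ ⊔ m₁) m₂ hm' μ :=
  condIndep_of_condExp_indicator_sup_ae_eq hm' (sup_le hm₃ hm₁) hm₂ fun s hs => by
    rw [sup_assoc]
    exact (h'.condExp_indicator_sup_ae_eq hm₃ hm₂ hs).trans
      (h.condExp_indicator_sup_ae_eq hm₁ hm₂ hs)

end CondIndep

end ProbabilityTheory

theorem procSigma_mono {T Ω : Type*} [MeasurableSpace Ω] (X : T → Ω → ℝ) {S S' : Set T}
    (h : S ⊆ S') : procSigma X S ≤ procSigma X S' :=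
  biSup_mono h

theorem procSigma_union {T Ω : Type*} [MeasurableSpace Ω] (X : T → Ω → ℝ) (S S' : Set T) :
    procSigma X (S ∪ S') = procSigma X S ⊔ procSigma X S' :=
  iSup_union

theorem condIndep_separation_general {T Ω : Type*} [m : MeasurableSpace Ω]
    [StandardBorelSpace Ω] (μ : Measure Ω) [IsProbabilityMeasure μ]
    (X : T → Ω → ℝ) (hX : ∀ t, Measurable (X t))
    (A B : Set T)
    (A₁ A₂ : Set T) (hA₁ : A₁ ⊆ A) (hA₂ : A₂ ⊆ A)
    (h1 : CondIndep (procSigma X A₂) (procSigma X A₁) (procSigma X (A \ A₁))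
      (procSigma_le hX A₂) μ)
    (h2 : ∃ Ab : Set T, Ab ⊆ A \ A₁ ∧
      CondIndep (procSigma X Ab) (procSigma X A) (procSigma X B)
        (procSigma_le hX Ab) μ) :
    CondIndep (procSigma X A₂) (procSigma X (B ∪ (A \ A₁))) (procSigma X A₁)
      (procSigma_le hX A₂) μ := by
  obtain ⟨Ab, hAb, h2⟩ := h2
  have hσ := procSigma_le hX
  have hAbn : procSigma X Ab ≤ procSigma X (A \ A₁) ⊔ procSigma X A₂ :=
    le_sup_of_le_left (procSigma_mono X hAb)
  have hnA : procSigma X (A \ A₁) ⊔ procSigma X A₂ ≤ procSigma X A ⊔ procSigma X Ab :=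
    le_sup_of_le_left (sup_le (procSigma_mono X Set.sdiff_subset) (procSigma_mono X hA₂))
  have hB_A₁ : CondIndep (procSigma X (A \ A₁) ⊔ procSigma X A₂) (procSigma X B)
      (procSigma X A₁) (sup_le (hσ _) (hσ _)) μ :=
    (condIndep_of_condIndep_of_le_left (h2.weak_union (hσ A) (hσ B) _ hAbn hnA)
      (procSigma_mono X hA₁)).symm
  rw [procSigma_union]
  exact h1.symm.contraction (hσ _) (hσ _) (hσ _) hB_A₁

/-- Let `T = A ∪ B` and `X = (X t : t ∈ T)` be a stochastic process. Suppose
(1) `A₁, A₂ ⊆ A` are such that `X_{A₁}` is conditionally independent of `X_{A \ A₁}`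
given `X_{A₂}`, and (2) there is `A_b ⊆ A \ A₁` such that `X_A` and `X_B` are
conditionally independent given `X_{A_b}`. Then `X_{B ∪ (A \ A₁)}` and `X_{A₁}` are
conditionally independent given `X_{A₂}`. -/
theorem condIndep_separation {T Ω : Type*} [m : MeasurableSpace Ω]
    [StandardBorelSpace Ω] (μ : Measure Ω) [IsProbabilityMeasure μ]
    (X : T → Ω → ℝ) (hX : ∀ t, Measurable (X t))
    (A B : Set T) (hT : A ∪ B = Set.univ)
    (A₁ A₂ : Set T) (hA₁ : A₁ ⊆ A) (hA₂ : A₂ ⊆ A)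
    (h1 : CondIndep (procSigma X A₂) (procSigma X A₁) (procSigma X (A \ A₁))
      (procSigma_le hX A₂) μ)
    (h2 : ∃ Ab : Set T, Ab ⊆ A \ A₁ ∧
      CondIndep (procSigma X Ab) (procSigma X A) (procSigma X B)
        (procSigma_le hX Ab) μ) :
    CondIndep (procSigma X A₂) (procSigma X (B ∪ (A \ A₁))) (procSigma X A₁)
      (procSigma_le hX A₂) μ :=
  condIndep_separation_general (m := m) μ X hX A B A₁ A₂ hA₁ hA₂ h1 h2
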